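/- arXiv:1812.05923 — 2 statements merged into one kernel-verified Lean document; each statement's English description precedes it below -/
import Mathlib

section
/- Assume the representation setting on [β,l]. Then for every x ∈ [β,l], w''(x) − ω² w(x) = C₂ e^{−iω(x−β)} + (C₁/ω) sin(ω(x−β)) + (1/ω) ∫_β^x sin(ω(x−s)) F(s) ds. -/
/-!
Put `u = w'' - ω² w`. On `[β, l]` it solves `u'' + ω² u = F` with `u(β) = C₂` and
`u'(β) = C₁ - iω C₂`. The right-hand side solves the same problem: the exponential and sine terms
are homogeneous solutions carrying the initial data, and the Duhamel term
`D(x) = ∫_β^x sin(ω(x-s)) F(s) ds` satisfies `D' = ω ∫_β^x cos(ω(x-s)) F(s) ds` and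
`D'' = ω F - ω² D`, as one sees after splitting `sin(ω(x-s))` by the addition formula, which turns
`D` into a combination of integrals with variable upper limit only. Uniqueness for the Lipschitz
first-order system satisfied by `(y, y')` then identifies the two.
-/

open Complex Set

theorem ODE_linear_second_order_unique_of_mem_Icc {a b : ℝ} (q : ℂ) {G y y' z z' : ℝ → ℂ}
    (hy : ∀ x ∈ Icc a b, HasDerivAt y (y' x) x)
    (hy' : ∀ x ∈ Icc a b, HasDerivAt y' (G x - q * y x) x)
    (hz : ∀ x ∈ Icc a b, HasDerivAt z (z' x) x)
    (hz' : ∀ x ∈ Icc a b, HasDerivAt z' (G x - q * z x) x)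
    (h₀ : y a = z a) (h₁ : y' a = z' a) : EqOn y z (Icc a b) := by
  let L : ℂ × ℂ →L[ℂ] ℂ × ℂ :=
    (ContinuousLinearMap.snd ℂ ℂ ℂ).prod (-q • ContinuousLinearMap.fst ℂ ℂ ℂ)
  let v : ℝ → ℂ × ℂ → ℂ × ℂ := fun t P => L P + (0, G t)
  have hv : ∀ t, LipschitzWith ‖L‖₊ (v t) := fun t =>
    LipschitzWith.of_dist_le_mul fun P Q => by simpa [v] using L.lipschitz.dist_le_mul P Q
  have hsol : ∀ {f f' : ℝ → ℂ}, (∀ x ∈ Icc a b, HasDerivAt f (f' x) x) →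
      (∀ x ∈ Icc a b, HasDerivAt f' (G x - q * f x) x) →
      ∀ x ∈ Icc a b, HasDerivAt (fun t => (f t, f' t)) (v x (f x, f' x)) x := by
    intro f f' hf hf' x hx
    convert (hf x hx).prodMk (hf' x hx) using 1
    simp only [ContinuousLinearMap.prod_apply, ContinuousLinearMap.coe_snd', smul_apply,
      ContinuousLinearMap.coe_fst', smul_eq_mul, Prod.mk_add_mk, add_zero, Prod.mk.injEq,
      true_and, v, L]
    ring
  have key := ODE_solution_unique_of_mem_Icc_right (s := fun _ => univ)
    (fun t _ => (hv t).lipschitzOnWith)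
    (fun x hx => (hsol hy hy' x hx).continuousAt.continuousWithinAt)
    (fun x hx => (hsol hy hy' x (Ico_subset_Icc_self hx)).hasDerivWithinAt)
    (fun _ _ => mem_univ _)
    (fun x hx => (hsol hz hz' x hx).continuousAt.continuousWithinAt)
    (fun x hx => (hsol hz hz' x (Ico_subset_Icc_self hx)).hasDerivWithinAt)
    (fun _ _ => mem_univ _) (Prod.ext h₀ h₁)
  exact fun x hx => congrArg Prod.fst (key hx)

noncomputable def duhamelSin (ω β : ℝ) (F : ℝ → ℂ) (x : ℝ) : ℂ :=
  ∫ s in β..x, ((Real.sin (ω * (x - s)) : ℝ) : ℂ) * F s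

noncomputable def duhamelCos (ω β : ℝ) (F : ℝ → ℂ) (x : ℝ) : ℂ :=
  ∫ s in β..x, ((Real.cos (ω * (x - s)) : ℝ) : ℂ) * F s

section Duhamel

variable (ω β : ℝ) {F : ℝ → ℂ}

theorem hasDerivAt_ofReal_sin_mul (x : ℝ) :
    HasDerivAt (fun t : ℝ => ((Real.sin (ω * t) : ℝ) : ℂ)) (ω * Real.cos (ω * x)) x := by
  refine (((hasDerivAt_id' x).const_mul ω).sin).ofReal_comp.congr_deriv ?_
  push_cast; ring

theorem hasDerivAt_ofReal_cos_mul (x : ℝ) :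
    HasDerivAt (fun t : ℝ => ((Real.cos (ω * t) : ℝ) : ℂ)) (-(ω * Real.sin (ω * x))) x := by
  refine (((hasDerivAt_id' x).const_mul ω).cos).ofReal_comp.congr_deriv ?_
  push_cast; ring

theorem duhamelSin_eq (hF : Continuous F) (x : ℝ) :
    duhamelSin ω β F x = Real.sin (ω * x) * (∫ s in β..x, ((Real.cos (ω * s) : ℝ) : ℂ) * F s)
      - Real.cos (ω * x) * ∫ s in β..x, ((Real.sin (ω * s) : ℝ) : ℂ) * F s := by
  rw [← intervalIntegral.integral_const_mul, ← intervalIntegral.integral_const_mul,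
    ← intervalIntegral.integral_sub (by apply Continuous.intervalIntegrable; fun_prop)
      (by apply Continuous.intervalIntegrable; fun_prop)]
  refine intervalIntegral.integral_congr fun s _ => ?_
  simp only [mul_sub, Real.sin_sub]
  push_cast; ring

theorem duhamelCos_eq (hF : Continuous F) (x : ℝ) :
    duhamelCos ω β F x = Real.cos (ω * x) * (∫ s in β..x, ((Real.cos (ω * s) : ℝ) : ℂ) * F s)
      + Real.sin (ω * x) * ∫ s in β..x, ((Real.sin (ω * s) : ℝ) : ℂ) * F s := by
  rw [← intervalIntegral.integral_const_mul, ← intervalIntegral.integral_const_mul,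
    ← intervalIntegral.integral_add (by apply Continuous.intervalIntegrable; fun_prop)
      (by apply Continuous.intervalIntegrable; fun_prop)]
  refine intervalIntegral.integral_congr fun s _ => ?_
  simp only [mul_sub, Real.cos_sub]
  push_cast; ring

theorem hasDerivAt_duhamelSin (hF : Continuous F) (x : ℝ) :
    HasDerivAt (duhamelSin ω β F) (ω * duhamelCos ω β F x) x := by
  have hA := (show Continuous fun s => ((Real.cos (ω * s) : ℝ) : ℂ) * F s by fun_prop)
    |>.integral_hasStrictDerivAt β x |>.hasDerivAt
  have hB := (show Continuous fun s => ((Real.sin (ω * s) : ℝ) : ℂ) * F s by fun_prop)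
    |>.integral_hasStrictDerivAt β x |>.hasDerivAt
  rw [funext (duhamelSin_eq ω β hF), duhamelCos_eq ω β hF]
  refine (((hasDerivAt_ofReal_sin_mul ω x).mul hA).sub
    ((hasDerivAt_ofReal_cos_mul ω x).mul hB)).congr_deriv ?_
  ring

theorem hasDerivAt_duhamelCos (hF : Continuous F) (x : ℝ) :
    HasDerivAt (duhamelCos ω β F) (F x - ω * duhamelSin ω β F x) x := by
  have hA := (show Continuous fun s => ((Real.cos (ω * s) : ℝ) : ℂ) * F s by fun_prop)
    |>.integral_hasStrictDerivAt β x |>.hasDerivAt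
  have hB := (show Continuous fun s => ((Real.sin (ω * s) : ℝ) : ℂ) * F s by fun_prop)
    |>.integral_hasStrictDerivAt β x |>.hasDerivAt
  rw [funext (duhamelCos_eq ω β hF), duhamelSin_eq ω β hF]
  refine (((hasDerivAt_ofReal_cos_mul ω x).mul hA).add
    ((hasDerivAt_ofReal_sin_mul ω x).mul hB)).congr_deriv ?_
  have hpyth : ((Real.sin (ω * x) : ℝ) : ℂ) ^ 2 + ((Real.cos (ω * x) : ℝ) : ℂ) ^ 2 = 1 := by
    exact_mod_cast Real.sin_sq_add_cos_sq (ω * x)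
  linear_combination F x * hpyth

end Duhamel

theorem hasDerivAt_cexp_mul_ofReal_sub (β : ℝ) (c : ℂ) (x : ℝ) :
    HasDerivAt (fun t : ℝ => cexp (c * ((t - β : ℝ) : ℂ)))
      (c * cexp (c * ((x - β : ℝ) : ℂ))) x := by
  refine ((((hasDerivAt_id' x).sub_const β).ofReal_comp.const_mul c).cexp).congr_deriv ?_
  rw [ofReal_one, mul_one, mul_comm]

noncomputable def representation (ω β : ℝ) (F : ℝ → ℂ) (C₁ C₂ : ℂ) (x : ℝ) : ℂ :=
  C₂ * cexp (-(I * ω * ((x - β : ℝ) : ℂ))) + (C₁ / (ω : ℂ)) * ((Real.sin (ω * (x - β)) : ℝ) : ℂ)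
    + (1 / (ω : ℂ)) * duhamelSin ω β F x

noncomputable def representationDeriv (ω β : ℝ) (F : ℝ → ℂ) (C₁ C₂ : ℂ) (x : ℝ) : ℂ :=
  -(I * ω) * C₂ * cexp (-(I * ω * ((x - β : ℝ) : ℂ))) + C₁ * ((Real.cos (ω * (x - β)) : ℝ) : ℂ)
    + duhamelCos ω β F x

section Representation

variable {ω : ℝ} (β : ℝ) {F : ℝ → ℂ} (C₁ C₂ : ℂ)

theorem hasDerivAt_representation (hω : ω ≠ 0) (hF : Continuous F) (x : ℝ) :
    HasDerivAt (representation ω β F C₁ C₂) (representationDeriv ω β F C₁ C₂ x) x := by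
  have hexp := hasDerivAt_cexp_mul_ofReal_sub β (-(I * ω)) x
  simp only [neg_mul] at hexp
  refine (((hexp.const_mul C₂).add
    (((hasDerivAt_ofReal_sin_mul ω (x - β)).comp_sub_const x β).const_mul (C₁ / (ω : ℂ)))).add
    ((hasDerivAt_duhamelSin ω β hF x).const_mul (1 / (ω : ℂ)))).congr_deriv ?_
  have : (ω : ℂ) ≠ 0 := ofReal_ne_zero.mpr hω
  simp only [representationDeriv]
  field_simp

theorem hasDerivAt_representationDeriv (hω : ω ≠ 0) (hF : Continuous F) (x : ℝ) :
    HasDerivAt (representationDeriv ω β F C₁ C₂)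
      (F x - (ω : ℂ) ^ 2 * representation ω β F C₁ C₂ x) x := by
  have hexp := hasDerivAt_cexp_mul_ofReal_sub β (-(I * ω)) x
  simp only [neg_mul] at hexp
  refine (((hexp.const_mul (-(I * ω) * C₂)).add
    (((hasDerivAt_ofReal_cos_mul ω (x - β)).comp_sub_const x β).const_mul C₁)).add
    (hasDerivAt_duhamelCos ω β hF x)).congr_deriv ?_
  have : (ω : ℂ) ≠ 0 := ofReal_ne_zero.mpr hω
  simp only [representation]
  field_simp
  linear_combination ((ω : ℂ) ^ 2 * C₂ * cexp (-(I * ω * ((x - β : ℝ) : ℂ)))) * I_sq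

end Representation

theorem hasDerivAt_iteratedDeriv {𝕜 E : Type*} [NontriviallyNormedField 𝕜] [NormedAddCommGroup E]
    [NormedSpace 𝕜 E] {n k : ℕ} {f : 𝕜 → E} (hf : ContDiff 𝕜 n f) (hk : k < n) (x : 𝕜) :
    HasDerivAt (iteratedDeriv k f) (iteratedDeriv (k + 1) f x) x := by
  rw [iteratedDeriv_succ]
  exact (hf.differentiable_iteratedDeriv k (by exact_mod_cast hk) x).hasDerivAt

theorem representation_second_order_general
    (ω β l : ℝ) (hω : 0 < ω)
    (F : ℝ → ℂ) (hF : Continuous F)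
    (w : ℝ → ℂ) (hw : ContDiff ℝ 4 w)
    (hode : ∀ x ∈ Set.Icc β l, iteratedDeriv 4 w x - ((ω^4 : ℝ) : ℂ) * w x = F x)
    (C₁ C₂ : ℂ)
    (hC₁ : C₁ = iteratedDeriv 3 w β + I * ω * iteratedDeriv 2 w β
        - (ω^2 : ℝ) * deriv w β - I * (ω^3 : ℝ) * w β)
    (hC₂ : C₂ = iteratedDeriv 2 w β - (ω^2 : ℝ) * w β) :
    ∀ x ∈ Set.Icc β l,
      iteratedDeriv 2 w x - (ω^2 : ℝ) * w x
        = C₂ * Complex.exp (-(I * ω * ((x - β : ℝ) : ℂ)))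
          + (C₁ / (ω : ℂ)) * ((Real.sin (ω * (x - β)) : ℝ) : ℂ)
          + (1 / (ω : ℂ)) * ∫ s in β..x, ((Real.sin (ω * (x - s)) : ℝ) : ℂ) * F s := by
  have hD (k : ℕ) (hk : k < 4) := hasDerivAt_iteratedDeriv hw (by exact_mod_cast hk)
  have hu (x : ℝ) : HasDerivAt (fun t => iteratedDeriv 2 w t - (ω : ℂ) ^ 2 * w t)
      (iteratedDeriv 3 w x - (ω : ℂ) ^ 2 * iteratedDeriv 1 w x) x := by
    have hw₁ := hD 0 (by norm_num) x
    rw [iteratedDeriv_zero] at hw₁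
    exact (hD 2 (by norm_num) x).sub (hw₁.const_mul _)
  have hu' : ∀ x ∈ Icc β l,
      HasDerivAt (fun t => iteratedDeriv 3 w t - (ω : ℂ) ^ 2 * iteratedDeriv 1 w t)
      (F x - (ω : ℂ) ^ 2 * (iteratedDeriv 2 w x - (ω : ℂ) ^ 2 * w x)) x := by
    intro x hx
    refine ((hD 3 (by norm_num) x).sub ((hD 1 (by norm_num) x).const_mul _)).congr_deriv ?_
    have h := hode x hx
    push_cast at h
    linear_combination h
  intro x hx
  rw [ofReal_pow]
  refine ODE_linear_second_order_unique_of_mem_Icc _ (fun t _ => hu t) hu'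
    (fun t _ => hasDerivAt_representation β C₁ C₂ hω.ne' hF t)
    (fun t _ => hasDerivAt_representationDeriv β C₁ C₂ hω.ne' hF t) ?_ ?_ hx
  · simp [representation, duhamelSin, hC₂]
  · simp [representationDeriv, duhamelCos, hC₁, hC₂]
    ring

/-- Second-order representation of `w'''' − ω⁴ w = F` on `[β,l]`: for all `x ∈ [β,l]`,
`w''(x) − ω² w(x) = C₂ e^{−iω(x−β)} + (C₁/ω) sin(ω(x−β)) + (1/ω)∫_β^x sin(ω(x−s)) F(s) ds`,
where `C₁ = w'''(β) + iω w''(β) − ω² w'(β) − iω³ w(β)` and `C₂ = w''(β) − ω² w(β)`. -/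
theorem representation_second_order
    (ω β l : ℝ) (hω : 0 < ω) (hβl : β < l)
    (F : ℝ → ℂ) (hF : Continuous F)
    (w : ℝ → ℂ) (hw : ContDiff ℝ 4 w)
    (hode : ∀ x ∈ Set.Icc β l, iteratedDeriv 4 w x - ((ω^4 : ℝ) : ℂ) * w x = F x)
    (C₁ C₂ : ℂ)
    (hC₁ : C₁ = iteratedDeriv 3 w β + I * ω * iteratedDeriv 2 w β
        - (ω^2 : ℝ) * deriv w β - I * (ω^3 : ℝ) * w β)
    (hC₂ : C₂ = iteratedDeriv 2 w β - (ω^2 : ℝ) * w β) :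
    ∀ x ∈ Set.Icc β l,
      iteratedDeriv 2 w x - (ω^2 : ℝ) * w x
        = C₂ * Complex.exp (-(I * ω * ((x - β : ℝ) : ℂ)))
          + (C₁ / (ω : ℂ)) * ((Real.sin (ω * (x - β)) : ℝ) : ℂ)
          + (1 / (ω : ℂ)) * ∫ s in β..x, ((Real.sin (ω * (x - s)) : ℝ) : ℂ) * F s :=
  representation_second_order_general ω β l hω F hF w hw hode C₁ C₂ hC₁ hC₂
end

section
/- Let a < b be real numbers and let f : [a,b] → ℂ be continuously differentiable. Then |f(a)|² ≤ (1/(b−a)) ∫_a^b |f(x)|² dx + 2 ( ∫_a^b |f(x)|² dx )^{1/2} ( ∫_a^b |f'(x)|² dx )^{1/2}. -/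
/-!
Since `(‖f‖²)' = 2⟪f, f'⟫` is bounded by `2‖f‖‖f'‖`, the fundamental theorem of calculus gives
`‖f a‖² ≤ ‖f y‖² + 2 ∫_a^b ‖f‖‖f'‖` for every `y ∈ [a,b]`. Averaging over `y` and applying
Cauchy–Schwarz to `∫_a^b ‖f‖‖f'‖` gives the inequality.
-/

open MeasureTheory Set

theorem ContinuousOn.memLp_two_restrict_Ioc {E : Type*} [NormedAddCommGroup E] {u : ℝ → E}
    {a b : ℝ} (hu : ContinuousOn u (Icc a b)) : MemLp u 2 (volume.restrict (Ioc a b)) := by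
  have hu' := hu.mono Ioc_subset_Icc_self
  refine (memLp_two_iff_integrable_sq_norm (hu'.aestronglyMeasurable measurableSet_Ioc)).2 ?_
  exact ((hu.norm.pow 2).integrableOn_Icc).mono_set Ioc_subset_Icc_self

theorem intervalIntegral.integral_norm_mul_norm_le {E : Type*} [NormedAddCommGroup E]
    {u v : ℝ → E} {a b : ℝ} (hab : a ≤ b) (hu : ContinuousOn u (Icc a b))
    (hv : ContinuousOn v (Icc a b)) :
    ∫ x in a..b, ‖u x‖ * ‖v x‖
      ≤ (∫ x in a..b, ‖u x‖ ^ 2) ^ ((1 : ℝ) / 2) * (∫ x in a..b, ‖v x‖ ^ 2) ^ ((1 : ℝ) / 2) := by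
  simp only [intervalIntegral.integral_of_le hab, ← Real.rpow_two]
  exact integral_mul_norm_le_Lp_mul_Lq Real.HolderConjugate.two_two
    (by simpa using hu.memLp_two_restrict_Ioc) (by simpa using hv.memLp_two_restrict_Ioc)

theorem le_one_div_sub_mul_integral_of_forall_le {φ : ℝ → ℝ} {a b c : ℝ} (hab : a < b)
    (hφ : IntervalIntegrable φ volume a b) (h : ∀ y ∈ Icc a b, c ≤ φ y) :
    c ≤ 1 / (b - a) * ∫ y in a..b, φ y := by
  have := intervalIntegral.integral_mono_on hab.le intervalIntegrable_const hφ h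
  rw [intervalIntegral.integral_const, smul_eq_mul] at this
  rw [one_div_mul_eq_div, le_div_iff₀ (sub_pos.2 hab), mul_comm]
  exact this

theorem sq_norm_le_sq_norm_add_two_mul_integral {F : Type*} [NormedAddCommGroup F]
    [InnerProductSpace ℝ F] {f f' : ℝ → F} {a b y : ℝ} (hy : y ∈ Icc a b)
    (hf : ∀ x ∈ Icc a b, HasDerivAt f (f' x) x) (hf' : ContinuousOn f' (Icc a b)) :
    ‖f a‖ ^ 2 ≤ ‖f y‖ ^ 2 + 2 * ∫ x in a..b, ‖f x‖ * ‖f' x‖ := by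
  have hfc : ContinuousOn f (Icc a b) := fun x hx => (hf x hx).continuousAt.continuousWithinAt
  have hsub : uIcc a y ⊆ Icc a b := by
    rw [uIcc_of_le hy.1]; exact Icc_subset_Icc_right hy.2
  have hinner : ContinuousOn (fun x => 2 * inner ℝ (f x) (f' x)) (Icc a b) :=
    continuousOn_const.mul (hfc.inner hf')
  have hftc : ∫ x in a..y, 2 * inner ℝ (f x) (f' x) = ‖f y‖ ^ 2 - ‖f a‖ ^ 2 :=
    intervalIntegral.integral_eq_sub_of_hasDerivAt (fun x hx => (hf x (hsub hx)).norm_sq)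
      (hinner.mono hsub).intervalIntegrable
  have hprod : ContinuousOn (fun x => 2 * (‖f x‖ * ‖f' x‖)) (Icc a b) :=
    continuousOn_const.mul (hfc.norm.mul hf'.norm)
  calc ‖f a‖ ^ 2 = ‖f y‖ ^ 2 + ∫ x in a..y, -(2 * inner ℝ (f x) (f' x)) := by
        rw [intervalIntegral.integral_neg, hftc]; ring
    _ ≤ ‖f y‖ ^ 2 + ∫ x in a..y, 2 * (‖f x‖ * ‖f' x‖) := by
        gcongr
        refine intervalIntegral.integral_mono_on hy.1 ?_ ?_ fun x _ => ?_
        · exact (hinner.mono hsub).neg.intervalIntegrable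
        · exact (hprod.mono hsub).intervalIntegrable
        · linarith [neg_le_of_abs_le (abs_real_inner_le_norm (f x) (f' x))]
    _ ≤ ‖f y‖ ^ 2 + ∫ x in a..b, 2 * (‖f x‖ * ‖f' x‖) := by
        gcongr
        refine intervalIntegral.integral_mono_interval le_rfl hy.1 hy.2 ?_ ?_
        · exact Filter.Eventually.of_forall fun x => by positivity
        · exact hprod.intervalIntegrable_of_Icc (hy.1.trans hy.2)
    _ = ‖f y‖ ^ 2 + 2 * ∫ x in a..b, ‖f x‖ * ‖f' x‖ := by
        rw [intervalIntegral.integral_const_mul]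

/-- Endpoint trace (interpolation) inequality on an interval: for `f ∈ C¹([a,b])`,
`|f(a)|² ≤ (1/(b−a)) ∫_a^b |f|² + 2 (∫_a^b |f|²)^{1/2} (∫_a^b |f'|²)^{1/2}`. -/
theorem endpoint_trace_inequality
    (a b : ℝ) (hab : a < b) (f : ℝ → ℂ) (hf : ContDiff ℝ 1 f) :
    ‖f a‖^2
      ≤ (1/(b - a)) * ∫ x in a..b, ‖f x‖^2
        + 2 * (∫ x in a..b, ‖f x‖^2) ^ ((1:ℝ)/2)
            * (∫ x in a..b, ‖deriv f x‖^2) ^ ((1:ℝ)/2) := by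
  have hfc : Continuous f := hf.continuous
  have hf' : Continuous (deriv f) := hf.continuous_deriv le_rfl
  have hderiv : ∀ x, HasDerivAt f (deriv f x) x :=
    fun x => (hf.differentiable one_ne_zero x).hasDerivAt
  -- The integral on the right extends over the whole sum: the right-hand side is an average over `y`.
  refine le_one_div_sub_mul_integral_of_forall_le hab
    (Continuous.intervalIntegrable (by fun_prop) a b) fun y hy => ?_
  calc ‖f a‖ ^ 2 ≤ ‖f y‖ ^ 2 + 2 * ∫ x in a..b, ‖f x‖ * ‖deriv f x‖ :=
        sq_norm_le_sq_norm_add_two_mul_integral hy (fun x _ => hderiv x) hf'.continuousOn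
    _ ≤ _ := by
        rw [mul_assoc]
        gcongr
        exact intervalIntegral.integral_norm_mul_norm_le hab.le hfc.continuousOn hf'.continuousOn
end
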